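/- In the setting of the 6×6 encoding matrices A^{(α)} = A(u_α, v_α) of a Post correspondence instance (u_α, v_α)_{α∈[d]} over an alphabet Σ of size b ≥ 1, let λ ∈ ℚ, let L = e₆ (the sixth standard basis vector of ℚ⁶) and R = e₁ − e₂ + e₃ − (λ+1)e₆. Then for every word w ∈ [d]*: ⟨L, A^{(w)} R⟩ = (σ(U(w)) − σ(V(w)))² − (λ+1). -/

import Mathlib

def numRep {S : Type*} (b : ℕ) (e : S ≃ Fin b) (w : List S) : ℕ :=
  ∑ j : Fin w.length, ((e (w.get j) : ℕ) + 1) * b ^ (w.length - 1 - (j : ℕ))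

/-- The 6×6 integer encoding matrix `A(u,v)` built from the numeric representation `σ`. -/
def encMat {S : Type*} (b : ℕ) (e : S ≃ Fin b) (u v : List S) :
    Matrix (Fin 6) (Fin 6) ℤ :=
  !![(b : ℤ) ^ (2 * u.length), 0, 0, 0, 0, 0;
     0, (b : ℤ) ^ (u.length + v.length), 0, 0, 0, 0;
     0, 0, (b : ℤ) ^ (2 * v.length), 0, 0, 0;
     (numRep b e u : ℤ) * (b : ℤ) ^ u.length, (numRep b e v : ℤ) * (b : ℤ) ^ u.length, 0,
       (b : ℤ) ^ u.length, 0, 0;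
     0, (numRep b e u : ℤ) * (b : ℤ) ^ v.length, (numRep b e v : ℤ) * (b : ℤ) ^ v.length, 0,
       (b : ℤ) ^ v.length, 0;
     (numRep b e u : ℤ) ^ 2, 2 * (numRep b e u : ℤ) * (numRep b e v : ℤ), (numRep b e v : ℤ) ^ 2,
       2 * (numRep b e u : ℤ), 2 * (numRep b e v : ℤ), 1]

/-- The boundary vector `L = e₆ ∈ ℚ⁶` (sixth standard basis vector). -/
def bndL : Fin 6 → ℚ := Pi.single 5 1

/-- The boundary vector `R = e₁ − e₂ + e₃ − (λ+1)e₆ ∈ ℚ⁶`. -/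
def bndR (lam : ℚ) : Fin 6 → ℚ :=
  (Pi.single 0 1 : Fin 6 → ℚ) - (Pi.single 1 1 : Fin 6 → ℚ)
    + (Pi.single 2 1 : Fin 6 → ℚ) - (lam + 1) • (Pi.single 5 1 : Fin 6 → ℚ)

/-!
Write `q(x, y) = (x², 2xy, y², 2x, 2y, 1)`. The columns of `A(u, v)` are chosen so that
`q(x, y) · A(u, v) = q(x b^|u| + σ(u), y b^|v| + σ(v))`, which is how appending `u` and `v`
acts on the pair of numbers `(σ(U), σ(V))`. Since `L = e₆ = q(0, 0)`, the row vector
`Lᵀ A^{(w)}` is `q(σ(U(w)), σ(V(w)))`, and pairing `q(x, y)` with `R` gives `(x - y)² - (λ + 1)`.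
-/

open Matrix

section NumRep

variable {S : Type*} (b : ℕ) (e : S ≃ Fin b)

@[simp]
lemma numRep_nil : numRep b e [] = 0 :=
  Finset.sum_empty

lemma numRep_cons (a : S) (t : List S) :
    numRep b e (a :: t) = ((e a : ℕ) + 1) * b ^ t.length + numRep b e t := by
  simp only [numRep, List.length_cons, Fin.sum_univ_succ]
  simp only [List.get_cons_zero, Fin.val_zero, Fin.val_succ, Nat.add_sub_cancel, Nat.sub_zero]
  congr 1
  refine Finset.sum_congr rfl fun j _ => ?_
  congr 2
  omega

lemma numRep_append (s t : List S) :
    numRep b e (s ++ t) = numRep b e s * b ^ t.length + numRep b e t := by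
  induction s with
  | nil => simp
  | cons a s ih =>
    rw [List.cons_append, numRep_cons, ih, numRep_cons, List.length_append, pow_add]
    ring

end NumRep

def quadRow {R : Type*} [CommRing R] (x y : R) : Fin 6 → R :=
  ![x ^ 2, 2 * x * y, y ^ 2, 2 * x, 2 * y, 1]

lemma quadRow_zero : quadRow (0 : ℚ) 0 = bndL := by
  ext i
  fin_cases i <;> simp [quadRow, bndL]

lemma quadRow_dotProduct_bndR (x y lam : ℚ) :
    quadRow x y ⬝ᵥ bndR lam = (x - y) ^ 2 - (lam + 1) := by
  simp [quadRow, bndR, dotProduct, Fin.sum_univ_six]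
  ring

section Word

variable {R : Type*} [CommRing R] {S : Type*} (b : ℕ) (e : S ≃ Fin b)

lemma quadRow_vecMul_encMat (u v : List S) (x y : R) :
    quadRow x y ᵥ* (encMat b e u v).map (Int.cast : ℤ → R)
      = quadRow (x * b ^ u.length + numRep b e u) (y * b ^ v.length + numRep b e v) := by
  ext i
  fin_cases i <;> simp [quadRow, encMat, vecMul, dotProduct, Fin.sum_univ_six] <;> ring

lemma quadRow_vecMul_prod_encMat {d : ℕ} (u v : Fin d → List S) (w : List (Fin d)) (x y : R) :
    quadRow x y ᵥ* (w.map fun α => encMat b e (u α) (v α)).prod.map (Int.cast : ℤ → R)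
      = quadRow (x * b ^ (w.map u).flatten.length + numRep b e (w.map u).flatten)
          (y * b ^ (w.map v).flatten.length + numRep b e (w.map v).flatten) := by
  have map_cast_mul (M N : Matrix (Fin 6) (Fin 6) ℤ) :
      (M * N).map (Int.cast : ℤ → R) = M.map Int.cast * N.map Int.cast :=
    Matrix.map_mul (f := Int.castRingHom R)
  induction w generalizing x y with
  | nil => simp
  | cons α w ih =>
    rw [List.map_cons, List.prod_cons, map_cast_mul, ← vecMul_vecMul, quadRow_vecMul_encMat, ih]
    simp only [List.map_cons, List.flatten_cons, List.length_append, numRep_append, pow_add]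
    push_cast
    congr 1 <;> ring

end Word

theorem encMat_pairing_general {S : Type*} (b d : ℕ) (e : S ≃ Fin b)
    (u v : Fin d → List S) (lam : ℚ) (w : List (Fin d)) :
    bndL ⬝ᵥ
        (((w.map fun α => encMat b e (u α) (v α)).prod.map
            (Int.cast : ℤ → ℚ)).mulVec (bndR lam))
      = ((numRep b e ((w.map u).flatten) : ℚ) - (numRep b e ((w.map v).flatten) : ℚ)) ^ 2
          - (lam + 1) := by
  rw [dotProduct_mulVec, ← quadRow_zero, quadRow_vecMul_prod_encMat, zero_mul, zero_mul,
    zero_add, zero_add, quadRow_dotProduct_bndR]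

open Matrix in
/-- With `L = e₆` and `R = e₁ − e₂ + e₃ − (λ+1)e₆` in `ℚ⁶`, for every word `w ∈ [d]*`:
`⟨L, A^{(w)} R⟩ = (σ(U(w)) − σ(V(w)))² − (λ+1)`. -/
theorem encMat_pairing {S : Type*} (b d : ℕ) (hb : 1 ≤ b) (e : S ≃ Fin b)
    (u v : Fin d → List S) (lam : ℚ) (w : List (Fin d)) :
    bndL ⬝ᵥ
        (((w.map fun α => encMat b e (u α) (v α)).prod.map
            (Int.cast : ℤ → ℚ)).mulVec (bndR lam))
      = ((numRep b e ((w.map u).flatten) : ℚ) - (numRep b e ((w.map v).flatten) : ℚ)) ^ 2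
          - (lam + 1) :=
  encMat_pairing_general b d e u v lam w
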